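/- The class of point functions is not o(|X|)-bit mergeable: there exists a constant c > 0 such that for every finite domain X = {1, …, |X|} with |X| ≥ 2 and every C ∈ ℕ, if the class H_pt of point functions over X is C-bit mergeable, then C ≥ c · |X|. -/

import Mathlib

/-- Empirical loss of hypothesis `h` on dataset `S` (sum of 0-1 losses). -/
def empLoss {X : Type} (h : X → Bool) (S : List (X × Bool)) : ℕ :=
  (S.map fun z => if h z.1 = z.2 then 0 else 1).sum

/-- A dataset is `H`-realizable if some hypothesis in `H` has zero empirical loss on it. -/
def IsRealizable {X : Type} (H : Set (X → Bool)) (S : List (X × Bool)) : Prop :=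
  ∃ h ∈ H, empLoss h S = 0

/-- The set of empirical risk minimizers in `H` on the dataset `S`. -/
def ERM {X : Type} (H : Set (X → Bool)) (S : List (X × Bool)) : Set (X → Bool) :=
  {h | h ∈ H ∧ ∀ g ∈ H, empLoss h S ≤ empLoss g S}

/-- The point function `h_a(x) = 1{x = a}` on the domain `Fin N` (representing `{1, …, N}`). -/
def pointFn {N : ℕ} (a : Fin N) : Fin N → Bool := fun x => decide (x = a)

/-- The class of point functions over `Fin N`. -/
def Hpt (N : ℕ) : Set (Fin N → Bool) := Set.range pointFn

/-!
Label negative all points of a set `A`. If two incomparable sets `A` and `B` had the same code,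
pick `a ∈ A \ B`, `b ∈ B \ A`, and append to both samples the negatives outside `B ∪ {a}`.
The two unions are realizable (by `h_b` and `h_a`) and by mergeability share a code, hence a
decoded hypothesis; on the second union only `h_a` has zero loss, and `h_a` errs at `a ∈ A` on
the first. So the code is injective on any antichain, e.g. on the images of the graphs of all
`s : Fin m → Bool` under an embedding `Fin m × Bool ↪ X` with `m = |X| / 2`, giving
`2 ^ (|X| / 2) ≤ 2 ^ C`.
-/

open Finset

section Loss

variable {X : Type}

lemma empLoss_append (h : X → Bool) (S T : List (X × Bool)) :
    empLoss h (S ++ T) = empLoss h S + empLoss h T := by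
  simp [empLoss]

lemma empLoss_eq_zero_iff (h : X → Bool) (S : List (X × Bool)) :
    empLoss h S = 0 ↔ ∀ z ∈ S, h z.1 = z.2 := by
  simp only [empLoss, List.sum_eq_zero_iff, List.mem_map]
  constructor
  · intro H z hz
    by_contra hne
    simpa [hne] using H _ ⟨z, hz, rfl⟩
  · rintro H _ ⟨z, hz, rfl⟩
    simp [H z hz]

lemma empLoss_eq_zero_of_mem_ERM {H : Set (X → Bool)} {S : List (X × Bool)} {h : X → Bool}
    (hS : IsRealizable H S) (hh : h ∈ ERM H S) : empLoss h S = 0 := by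
  obtain ⟨g, hg, hg0⟩ := hS
  exact Nat.le_zero.mp (hg0 ▸ hh.2 g hg)

noncomputable def negatives (A : Finset X) : List (X × Bool) :=
  A.toList.map fun x => (x, false)

end Loss

lemma empLoss_pointFn_negatives_eq_zero_iff {N : ℕ} (c : Fin N) (A : Finset (Fin N)) :
    empLoss (pointFn c) (negatives A) = 0 ↔ c ∉ A := by
  simp [empLoss_eq_zero_iff, negatives, pointFn]

lemma empLoss_pointFn_negatives_append_eq_zero_iff {N : ℕ} (c : Fin N) (A B : Finset (Fin N)) :
    empLoss (pointFn c) (negatives A ++ negatives B) = 0 ↔ c ∉ A ∧ c ∉ B := by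
  rw [empLoss_append, add_eq_zero, empLoss_pointFn_negatives_eq_zero_iff,
    empLoss_pointFn_negatives_eq_zero_iff]

lemma encode_negatives_ne_of_not_subset {N C : ℕ} {Encode : List (Fin N × Bool) → Fin C → Bool}
    {Decode : (Fin C → Bool) → Fin N → Bool}
    {Merge : (Fin C → Bool) → (Fin C → Bool) → Fin C → Bool}
    (hERM : ∀ S, IsRealizable (Hpt N) S → Decode (Encode S) ∈ ERM (Hpt N) S)
    (hMerge : ∀ S₁ S₂, IsRealizable (Hpt N) (S₁ ++ S₂) →
      Encode (S₁ ++ S₂) = Merge (Encode S₁) (Encode S₂))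
    {A B : Finset (Fin N)} (hAB : ¬ A ⊆ B) (hBA : ¬ B ⊆ A) :
    Encode (negatives A) ≠ Encode (negatives B) := by
  intro hEq
  obtain ⟨a, haA, haB⟩ := not_subset.mp hAB
  obtain ⟨b, hbB, hbA⟩ := not_subset.mp hBA
  set T := negatives (insert a B)ᶜ
  have realizable {D : Finset (Fin N)} {c : Fin N} (hcD : c ∉ D) (hc : c ∉ (insert a B)ᶜ) :
      IsRealizable (Hpt N) (negatives D ++ T) :=
    ⟨pointFn c, ⟨c, rfl⟩, (empLoss_pointFn_negatives_append_eq_zero_iff c D _).mpr ⟨hcD, hc⟩⟩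
  have hA : IsRealizable (Hpt N) (negatives A ++ T) := realizable hbA (by simp [hbB])
  have hB : IsRealizable (Hpt N) (negatives B ++ T) := realizable haB (by simp)
  obtain ⟨c, hc⟩ := (hERM _ hB).1
  have hcB := empLoss_eq_zero_of_mem_ERM hB (hERM _ hB)
  rw [← hc, empLoss_pointFn_negatives_append_eq_zero_iff] at hcB
  have hca : c = a := by simpa [hcB.1] using hcB.2
  have hEnc : Encode (negatives A ++ T) = Encode (negatives B ++ T) := by
    rw [hMerge _ _ hA, hMerge _ _ hB, hEq]
  have hcA := empLoss_eq_zero_of_mem_ERM hA (hERM _ hA)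
  rw [hEnc, ← hc, empLoss_pointFn_negatives_append_eq_zero_iff] at hcA
  exact hcA.1 (hca ▸ haA)

section Graph

variable {α X : Type} [Fintype α] [DecidableEq X]

def embeddedGraph (e : α × Bool ↪ X) (s : α → Bool) : Finset X :=
  univ.image fun i => e (i, s i)

lemma embeddedGraph_not_subset (e : α × Bool ↪ X) {s t : α → Bool} (hst : s ≠ t) :
    ¬ embeddedGraph e s ⊆ embeddedGraph e t := by
  obtain ⟨i, hi⟩ := Function.ne_iff.mp hst
  intro hsub
  obtain ⟨j, -, hj⟩ := mem_image.mp (hsub (mem_image_of_mem _ (mem_univ i)))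
  obtain ⟨rfl, hij⟩ := Prod.ext_iff.mp (e.injective hj)
  exact hi hij.symm

end Graph

lemma le_of_two_mul_le_of_mergeable {N C : ℕ} {Encode : List (Fin N × Bool) → Fin C → Bool}
    {Decode : (Fin C → Bool) → Fin N → Bool}
    {Merge : (Fin C → Bool) → (Fin C → Bool) → Fin C → Bool}
    (hERM : ∀ S, IsRealizable (Hpt N) S → Decode (Encode S) ∈ ERM (Hpt N) S)
    (hMerge : ∀ S₁ S₂, IsRealizable (Hpt N) (S₁ ++ S₂) →
      Encode (S₁ ++ S₂) = Merge (Encode S₁) (Encode S₂))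
    {m : ℕ} (hm : 2 * m ≤ N) : m ≤ C := by
  obtain ⟨e⟩ : Nonempty (Fin m × Bool ↪ Fin N) :=
    Function.Embedding.nonempty_of_card_le (by simpa [mul_comm] using hm)
  have hinj : Function.Injective fun s : Fin m → Bool => Encode (negatives (embeddedGraph e s)) :=
    fun s t hst => by_contra fun hne => encode_negatives_ne_of_not_subset hERM hMerge
      (embeddedGraph_not_subset e hne) (embeddedGraph_not_subset e (Ne.symm hne)) hst
  have hcard : 2 ^ m ≤ 2 ^ C := by simpa using Fintype.card_le_of_injective _ hinj
  exact (Nat.pow_le_pow_iff_right (by norm_num)).mp hcard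

/-- **Proposition (point functions are not `o(|X|)`-bit mergeable).** There is a constant
`c > 0` such that for every finite domain of size `N ≥ 2` and every `C`, if the class of
point functions over the domain is `C`-bit mergeable — i.e. there are a permutation-invariant
`Encode` into `{0,1}^C`, a `Decode` into the class with `Decode (Encode S) ∈ ERM(S)` for all
realizable `S`, and a `Merge` with `Encode (S₁ ∪ S₂) = Merge (Encode S₁) (Encode S₂)` whenever
`S₁ ∪ S₂` is realizable — then `C ≥ c · N`. -/
theorem point_functions_not_mergeable :
    ∃ c : ℝ, 0 < c ∧
      ∀ N : ℕ, 2 ≤ N → ∀ C : ℕ,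
        (∃ (Encode : List (Fin N × Bool) → Fin C → Bool)
           (Decode : (Fin C → Bool) → Fin N → Bool)
           (Merge : (Fin C → Bool) → (Fin C → Bool) → Fin C → Bool),
           (∀ S₁ S₂ : List (Fin N × Bool), S₁.Perm S₂ → Encode S₁ = Encode S₂) ∧
           (∀ b, Decode b ∈ Hpt N) ∧
           (∀ S, IsRealizable (Hpt N) S → Decode (Encode S) ∈ ERM (Hpt N) S) ∧
           (∀ S₁ S₂, IsRealizable (Hpt N) (S₁ ++ S₂) →
             Encode (S₁ ++ S₂) = Merge (Encode S₁) (Encode S₂))) →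
        c * N ≤ (C : ℝ) := by
  refine ⟨1 / 4, by norm_num, ?_⟩
  rintro N hN C ⟨Encode, Decode, Merge, -, -, hERM, hMerge⟩
  have hC : N / 2 ≤ C := le_of_two_mul_le_of_mergeable hERM hMerge (Nat.mul_div_le N 2)
  have hN4 : (N : ℝ) ≤ 4 * (N / 2 : ℕ) := by exact_mod_cast (by omega : N ≤ 4 * (N / 2))
  have hC' : ((N / 2 : ℕ) : ℝ) ≤ C := by exact_mod_cast hC
  linarith
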